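/- Let X_1,...,X_N be i.i.d. random variables with mean μ and finite variance σ². Then μ - (N-1)σ/√(2N-1) ≤ E[min_i X_i] ≤ μ, and E[min of N+1 copies] ≤ E[min of N copies]. -/

import Mathlib

/-!
Let `ν` be the common law, `F` its cdf and `Q` its quantile function, so that `Q` pushes the
uniform law on `(0, 1)` forward to `ν`. The minimum of `N` independent copies has survival
function `(1 - F)^N`, which is also the law of `Q` under the density `w(u) = N (1 - u)^(N-1)`
on `(0, 1)`. Hence `μ - E[min] = ∫₀¹ (Q - μ)(1 - w)`, and Cauchy–Schwarz with
`∫₀¹ (Q - μ)² = σ²` and `∫₀¹ (1 - w)² = (N - 1)² / (2N - 1)` gives the lower bound. The upper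
bounds are monotonicity of the integral: a minimum lies below each of its terms.
-/

open MeasureTheory ProbabilityTheory Set Filter
open scoped Topology ENNReal

theorem MeasureTheory.Measure.ext_of_Ioi {α : Type*} [TopologicalSpace α] {m : MeasurableSpace α}
    [SecondCountableTopology α] [LinearOrder α] [OrderTopology α] [BorelSpace α]
    {μ ν : Measure α} [IsProbabilityMeasure μ] [IsProbabilityMeasure ν]
    (h : ∀ a, μ (Ioi a) = ν (Ioi a)) : μ = ν :=
  Measure.ext_of_Iic μ ν fun a => by
    rw [← compl_Ioi, prob_compl_eq_one_sub measurableSet_Ioi,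
      prob_compl_eq_one_sub measurableSet_Ioi, h]

instance isProbabilityMeasure_restrict_Ioo_zero_one :
    IsProbabilityMeasure (volume.restrict (Ioo (0 : ℝ) 1)) :=
  ⟨by simp [Real.volume_Ioo]⟩

/-- Outside `(0, 1)` the value `0` is junk; `quantileFun ν` is only ever integrated against
measures carried by `Ioo 0 1`. -/
noncomputable def quantileFun (ν : Measure ℝ) (u : ℝ) : ℝ :=
  if u ∈ Ioo 0 1 then sInf {y | u ≤ cdf ν y} else 0

section Quantile

variable {ν : Measure ℝ}

lemma quantileFun_le_iff {u : ℝ} (hu : u ∈ Ioo 0 1) (x : ℝ) :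
    quantileFun ν u ≤ x ↔ u ≤ cdf ν x := by
  have hne : {y | u ≤ cdf ν y}.Nonempty := by
    obtain ⟨y, hy⟩ := ((tendsto_cdf_atTop ν).eventually (Ioi_mem_nhds hu.2)).exists
    exact ⟨y, hy.le⟩
  have hbdd : BddBelow {y | u ≤ cdf ν y} := by
    obtain ⟨z, hz⟩ := ((tendsto_cdf_atBot ν).eventually (Iio_mem_nhds hu.1)).exists
    exact ⟨z, fun y hy => le_of_not_ge fun hyz => (hy.trans (monotone_cdf ν hyz)).not_gt hz⟩
  rw [quantileFun, if_pos hu]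
  refine ⟨fun h => ?_, fun h => csInf_le hbdd h⟩
  have above : ∀ y, x < y → u ≤ cdf ν y := fun y hy => by
    obtain ⟨z, hz, hzy⟩ := exists_lt_of_csInf_lt hne (h.trans_lt hy)
    exact hz.trans (monotone_cdf ν hzy.le)
  have hright : Tendsto (cdf ν) (𝓝[>] x) (𝓝 (cdf ν x)) :=
    (cdf ν).right_continuous x |>.mono_left (nhdsWithin_mono x Ioi_subset_Ici_self)
  exact ge_of_tendsto hright (eventually_nhdsWithin_of_forall above)

lemma measurable_quantileFun : Measurable (quantileFun ν) := by
  refine measurable_of_Iic fun x => ?_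
  have : quantileFun ν ⁻¹' Iic x =
      (Ioo 0 1 ∩ Iic (cdf ν x)) ∪ ((Ioo 0 1)ᶜ ∩ {_u | 0 ≤ x}) := by
    ext u
    by_cases hu : u ∈ Ioo (0 : ℝ) 1
    · simp [quantileFun_le_iff hu, hu]
    · simp [quantileFun, hu]
  rw [this]
  exact (measurableSet_Ioo.inter measurableSet_Iic).union
    (measurableSet_Ioo.compl.inter (MeasurableSet.const _))

lemma quantileFun_preimage_Ioi_inter_Ioo (x : ℝ) :
    quantileFun ν ⁻¹' Ioi x ∩ Ioo 0 1 = Ioo (cdf ν x) 1 := by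
  ext u
  constructor
  · rintro ⟨hx, hu⟩
    exact ⟨lt_of_not_ge fun h => (not_le.2 hx) ((quantileFun_le_iff hu x).2 h), hu.2⟩
  · rintro ⟨h1, h2⟩
    have hu : u ∈ Ioo 0 1 := ⟨(cdf_nonneg ν x).trans_lt h1, h2⟩
    exact ⟨lt_of_not_ge fun h => h1.not_ge ((quantileFun_le_iff hu x).1 h), hu⟩

lemma map_withDensity_quantileFun_Ioi (f : ℝ → ℝ≥0∞) (x : ℝ) :
    ((volume.restrict (Ioo 0 1)).withDensity f).map (quantileFun ν) (Ioi x) =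
      ∫⁻ u in Ioo (cdf ν x) 1, f u := by
  have hpre : MeasurableSet (quantileFun ν ⁻¹' Ioi x) :=
    measurable_quantileFun measurableSet_Ioi
  rw [Measure.map_apply measurable_quantileFun measurableSet_Ioi, withDensity_apply _ hpre,
    Measure.restrict_restrict hpre, quantileFun_preimage_Ioi_inter_Ioo]

lemma measure_Ioi_eq_ofReal_one_sub_cdf [IsProbabilityMeasure ν] (x : ℝ) :
    ν (Ioi x) = ENNReal.ofReal (1 - cdf ν x) := by
  rw [← compl_Iic, prob_compl_eq_one_sub measurableSet_Iic, ← ofReal_cdf,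
    ENNReal.ofReal_sub _ (cdf_nonneg ν x), ENNReal.ofReal_one]

lemma map_quantileFun [IsProbabilityMeasure ν] :
    (volume.restrict (Ioo 0 1)).map (quantileFun ν) = ν := by
  have := Measure.isProbabilityMeasure_map (μ := volume.restrict (Ioo (0 : ℝ) 1))
    (measurable_quantileFun (ν := ν)).aemeasurable
  refine Measure.ext_of_Ioi fun x => ?_
  rw [← withDensity_one (μ := volume.restrict (Ioo 0 1)), map_withDensity_quantileFun_Ioi,
    measure_Ioi_eq_ofReal_one_sub_cdf]
  simp [Real.volume_Ioo]

lemma integral_comp_quantileFun [IsProbabilityMeasure ν] {g : ℝ → ℝ}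
    (hg : AEStronglyMeasurable g ν) :
    ∫ u in Ioo 0 1, g (quantileFun ν u) = ∫ x, g x ∂ν := by
  rw [← integral_map measurable_quantileFun.aemeasurable
    ((map_quantileFun (ν := ν)).symm ▸ hg), map_quantileFun]

lemma memLp_quantileFun [IsProbabilityMeasure ν] (h : MemLp id 2 ν) :
    MemLp (quantileFun ν) 2 (volume.restrict (Ioo 0 1)) :=
  (memLp_map_measure_iff aestronglyMeasurable_id measurable_quantileFun.aemeasurable).1
    ((map_quantileFun (ν := ν)).symm ▸ h)

end Quantile

noncomputable def minUniformDensity (n : ℕ) (u : ℝ) : ℝ := n * (1 - u) ^ (n - 1)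

section MinUniformDensity

variable {n : ℕ}

lemma continuous_minUniformDensity : Continuous (minUniformDensity n) := by
  unfold minUniformDensity; fun_prop

lemma minUniformDensity_nonneg {u : ℝ} (hu : u ≤ 1) : 0 ≤ minUniformDensity n u :=
  mul_nonneg n.cast_nonneg (pow_nonneg (sub_nonneg.2 hu) _)

lemma minUniformDensity_le {u : ℝ} (hu : u ∈ Ioo 0 1) : minUniformDensity n u ≤ n :=
  mul_le_of_le_one_right n.cast_nonneg (pow_le_one₀ (by linarith [hu.2]) (by linarith [hu.1]))

lemma hasDerivAt_neg_one_sub_pow (u : ℝ) :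
    HasDerivAt (fun v : ℝ => -(1 - v) ^ n) (minUniformDensity n u) u := by
  refine (((hasDerivAt_id u).const_sub 1).pow n).neg.congr_deriv ?_
  simp [minUniformDensity]

lemma integral_minUniformDensity (a b : ℝ) :
    ∫ u in a..b, minUniformDensity n u = (1 - a) ^ n - (1 - b) ^ n := by
  rw [intervalIntegral.integral_eq_sub_of_hasDerivAt (fun u _ => hasDerivAt_neg_one_sub_pow u)
    (continuous_minUniformDensity.intervalIntegrable a b)]
  ring

lemma lintegral_minUniformDensity_Ioo {a b : ℝ} (hab : a ≤ b) (hb : b ≤ 1) :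
    ∫⁻ u in Ioo a b, ENNReal.ofReal (minUniformDensity n u) =
      ENNReal.ofReal ((1 - a) ^ n - (1 - b) ^ n) := by
  rw [Measure.restrict_congr_set Ioo_ae_eq_Ioc, ← ofReal_integral_eq_lintegral_ofReal
    continuous_minUniformDensity.integrableOn_Ioc
    ((ae_restrict_iff' measurableSet_Ioc).2 (ae_of_all _ fun u hu =>
      minUniformDensity_nonneg (hu.2.trans hb))),
    ← intervalIntegral.integral_of_le hab, integral_minUniformDensity]

lemma setIntegral_minUniformDensity (hn : n ≠ 0) :
    ∫ u in Ioo 0 1, minUniformDensity n u = 1 := by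
  rw [integral_Ioc_eq_integral_Ioo.symm, ← intervalIntegral.integral_of_le zero_le_one,
    integral_minUniformDensity]
  simp [hn]

lemma setIntegral_minUniformDensity_sq (hn : 1 ≤ n) :
    ∫ u in Ioo 0 1, minUniformDensity n u ^ 2 = (n : ℝ) ^ 2 / (2 * n - 1) := by
  have hpos : (2 * n - 1 : ℝ) ≠ 0 := by
    have : (1 : ℝ) ≤ n := by exact_mod_cast hn
    linarith
  have hcast : ((2 * n - 1 : ℕ) : ℝ) = 2 * n - 1 := by
    rw [Nat.cast_sub (by omega)]; push_cast; ring
  have hderiv : ∀ u ∈ uIcc (0 : ℝ) 1, HasDerivAt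
      (fun v : ℝ => -((n : ℝ) ^ 2 / (2 * n - 1)) * (1 - v) ^ (2 * n - 1))
      (minUniformDensity n u ^ 2) u := fun u _ => by
    refine ((((hasDerivAt_id u).const_sub 1).pow (2 * n - 1)).const_mul
      (-((n : ℝ) ^ 2 / (2 * n - 1)))).congr_deriv ?_
    rw [minUniformDensity, mul_pow, ← pow_mul, hcast, show (n - 1) * 2 = 2 * n - 1 - 1 by omega]
    field_simp [hpos]
    grind
  rw [integral_Ioc_eq_integral_Ioo.symm, ← intervalIntegral.integral_of_le zero_le_one,
    intervalIntegral.integral_eq_sub_of_hasDerivAt hderiv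
      ((continuous_minUniformDensity.pow 2).intervalIntegrable 0 1)]
  simp [show 2 * n - 1 ≠ 0 by omega]

lemma memLp_minUniformDensity : MemLp (minUniformDensity n) 2 (volume.restrict (Ioo 0 1)) :=
  MemLp.of_bound continuous_minUniformDensity.aestronglyMeasurable n <|
    (ae_restrict_iff' measurableSet_Ioo).2 <| ae_of_all _ fun u hu => by
      rw [Real.norm_of_nonneg (minUniformDensity_nonneg hu.2.le)]
      exact minUniformDensity_le hu

lemma setIntegral_one_sub_minUniformDensity_sq (hn : 1 ≤ n) :
    ∫ u in Ioo 0 1, (1 - minUniformDensity n u) ^ 2 = ((n : ℝ) - 1) ^ 2 / (2 * n - 1) := by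
  have hw := (memLp_minUniformDensity (n := n)).integrable one_le_two
  have hw2 := (memLp_minUniformDensity (n := n)).integrable_sq
  have hpos : (2 * n - 1 : ℝ) ≠ 0 := by
    have : (1 : ℝ) ≤ n := by exact_mod_cast hn
    linarith
  have h2w : Integrable (fun u => 2 * minUniformDensity n u) (volume.restrict (Ioo 0 1)) :=
    hw.const_mul 2
  have h12w : Integrable (fun u => 1 - 2 * minUniformDensity n u) (volume.restrict (Ioo 0 1)) :=
    (integrable_const 1).sub h2w
  simp_rw [sub_sq, one_pow, mul_one]
  rw [integral_add h12w hw2, integral_sub (integrable_const 1) h2w, integral_const_mul,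
    setIntegral_minUniformDensity (by omega), setIntegral_minUniformDensity_sq hn,
    integral_const, probReal_univ, smul_eq_mul, mul_one]
  field_simp
  ring

instance isProbabilityMeasure_withDensity_minUniformDensity [NeZero n] :
    IsProbabilityMeasure ((volume.restrict (Ioo 0 1)).withDensity
      fun u => ENNReal.ofReal (minUniformDensity n u)) := by
  constructor
  rw [withDensity_apply _ MeasurableSet.univ, Measure.restrict_univ,
    lintegral_minUniformDensity_Ioo zero_le_one le_rfl]
  simp [NeZero.ne n]

end MinUniformDensity

theorem integral_mul_le_sqrt_integral_sq_mul_sqrt_integral_sq {α : Type*} [MeasurableSpace α]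
    {μ : Measure α} {f g : α → ℝ} (hf : MemLp f 2 μ) (hg : MemLp g 2 μ) :
    ∫ a, f a * g a ∂μ ≤ √(∫ a, f a ^ 2 ∂μ) * √(∫ a, g a ^ 2 ∂μ) := by
  have habs_sq : ∀ t : ℝ, |t| ^ (2 : ℝ) = t ^ 2 := fun t => by
    rw [Real.rpow_two, sq_abs]
  have hholder := integral_mul_le_Lp_mul_Lq_of_nonneg (μ := μ) Real.HolderConjugate.two_two
    (ae_of_all _ fun a => abs_nonneg (f a)) (ae_of_all _ fun a => abs_nonneg (g a))
    (by rw [ENNReal.ofReal_ofNat]; exact hf.abs) (by rw [ENNReal.ofReal_ofNat]; exact hg.abs)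
  simp only [habs_sq, ← Real.sqrt_eq_rpow] at hholder
  refine le_trans (integral_mono (hf.integrable_mul hg) (hf.abs.integrable_mul hg.abs)
    fun a => ?_) hholder
  simpa [abs_mul] using le_abs_self (f a * g a)

section Minimum

variable {Ω ι : Type*} [MeasurableSpace Ω] {P : Measure Ω} [Fintype ι] [Nonempty ι]
  {Y : ι → Ω → ℝ}

lemma integrable_iInf (hY : ∀ i, Integrable (Y i) P) :
    Integrable (fun ω => ⨅ i, Y i ω) P := by
  have h := Finset.inf'_induction Finset.univ_nonempty Y (p := (Integrable · P))
    (fun _ hf _ hg => hf.inf hg) fun i _ => hY i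
  convert h using 1
  ext ω
  rw [Finset.inf'_apply, Finset.inf'_univ_eq_ciInf]

lemma integral_iInf_le (hY : ∀ i, Integrable (Y i) P) (j : ι) :
    ∫ ω, ⨅ i, Y i ω ∂P ≤ ∫ ω, Y j ω ∂P :=
  integral_mono (integrable_iInf hY) (hY j) fun _ => Finite.ciInf_le _ j

lemma integral_iInf_le_integral_iInf_comp {κ : Type*} [Fintype κ] [Nonempty κ]
    (hY : ∀ i, Integrable (Y i) P) (e : κ → ι) :
    ∫ ω, ⨅ i, Y i ω ∂P ≤ ∫ ω, ⨅ k, Y (e k) ω ∂P :=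
  integral_mono (integrable_iInf hY) (integrable_iInf fun k => hY (e k)) fun _ =>
    le_ciInf fun k => Finite.ciInf_le _ (e k)

variable {ν : Measure ℝ}

lemma measure_lt_iInf (hind : iIndepFun Y P) (hmeas : ∀ i, Measurable (Y i))
    (hlaw : ∀ i, P.map (Y i) = ν) (x : ℝ) :
    P ((fun ω => ⨅ i, Y i ω) ⁻¹' Ioi x) = ν (Ioi x) ^ Fintype.card ι := by
  have hset : (fun ω => ⨅ i, Y i ω) ⁻¹' Ioi x = ⋂ i, Y i ⁻¹' Ioi x := by
    ext ω
    simp [← Finset.inf'_univ_eq_ciInf, Finset.lt_inf'_iff]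
  rw [hset, hind.meas_iInter fun i => ⟨Ioi x, measurableSet_Ioi, rfl⟩]
  simp_rw [← Measure.map_apply (hmeas _) measurableSet_Ioi, hlaw]
  rw [Finset.prod_const, Finset.card_univ]

lemma map_iInf_eq_map_quantileFun [IsProbabilityMeasure P] [IsProbabilityMeasure ν]
    (hind : iIndepFun Y P) (hmeas : ∀ i, Measurable (Y i)) (hlaw : ∀ i, P.map (Y i) = ν) :
    P.map (fun ω => ⨅ i, Y i ω) =
      ((volume.restrict (Ioo 0 1)).withDensity
        fun u => ENNReal.ofReal (minUniformDensity (Fintype.card ι) u)).map (quantileFun ν) := by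
  have hmin : Measurable fun ω => ⨅ i, Y i ω := Measurable.iInf hmeas
  have := Measure.isProbabilityMeasure_map (μ := P) hmin.aemeasurable
  have := Measure.isProbabilityMeasure_map (μ := (volume.restrict (Ioo 0 1)).withDensity
    fun u => ENNReal.ofReal (minUniformDensity (Fintype.card ι) u))
    (measurable_quantileFun (ν := ν)).aemeasurable
  refine Measure.ext_of_Ioi fun x => ?_
  have hq : 0 ≤ 1 - cdf ν x := sub_nonneg.2 (cdf_le_one ν x)
  rw [Measure.map_apply hmin measurableSet_Ioi, map_withDensity_quantileFun_Ioi,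
    lintegral_minUniformDensity_Ioo (cdf_le_one ν x) le_rfl, measure_lt_iInf hind hmeas hlaw x,
    measure_Ioi_eq_ofReal_one_sub_cdf, ← ENNReal.ofReal_pow hq]
  simp [Fintype.card_ne_zero]

lemma integral_iInf_eq_setIntegral_quantileFun_mul [IsProbabilityMeasure P]
    [IsProbabilityMeasure ν] (hind : iIndepFun Y P) (hmeas : ∀ i, Measurable (Y i))
    (hlaw : ∀ i, P.map (Y i) = ν) :
    ∫ ω, ⨅ i, Y i ω ∂P =
      ∫ u in Ioo 0 1, quantileFun ν u * minUniformDensity (Fintype.card ι) u := by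
  calc ∫ ω, ⨅ i, Y i ω ∂P = ∫ x, x ∂(P.map fun ω => ⨅ i, Y i ω) :=
        (integral_map (Measurable.iInf hmeas).aemeasurable aestronglyMeasurable_id).symm
    _ = ∫ u, quantileFun ν u ∂((volume.restrict (Ioo 0 1)).withDensity
          fun u => ENNReal.ofReal (minUniformDensity (Fintype.card ι) u)) := by
      rw [map_iInf_eq_map_quantileFun hind hmeas hlaw]
      exact integral_map measurable_quantileFun.aemeasurable aestronglyMeasurable_id
    _ = _ := by
      rw [integral_withDensity_eq_integral_toReal_smul
        continuous_minUniformDensity.measurable.ennreal_ofReal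
        (ae_of_all _ fun _ => ENNReal.ofReal_lt_top)]
      refine setIntegral_congr_fun measurableSet_Ioo fun u hu => ?_
      rw [ENNReal.toReal_ofReal (minUniformDensity_nonneg hu.2.le), smul_eq_mul, mul_comm]

end Minimum

lemma sub_setIntegral_quantileFun_mul_minUniformDensity_le {ν : Measure ℝ}
    [IsProbabilityMeasure ν] (hν : MemLp id 2 ν) {n : ℕ} (hn : 1 ≤ n) :
    (∫ x, x ∂ν) - ∫ u in Ioo 0 1, quantileFun ν u * minUniformDensity n u ≤
      (n - 1) * √(Var[id; ν]) / √(2 * n - 1) := by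
  set m := ∫ x, x ∂ν
  have hQ := memLp_quantileFun hν
  have hw := memLp_minUniformDensity (n := n)
  have hQi := hQ.integrable one_le_two
  have hQw : Integrable (fun u => quantileFun ν u * minUniformDensity n u)
      (volume.restrict (Ioo 0 1)) := hQ.integrable_mul hw
  have hmw : Integrable (fun u => m * minUniformDensity n u) (volume.restrict (Ioo 0 1)) :=
    (hw.integrable one_le_two).const_mul m
  have hmean : ∫ u in Ioo 0 1, quantileFun ν u = m :=
    integral_comp_quantileFun (g := id) aestronglyMeasurable_id
  have hvar : ∫ u in Ioo 0 1, (quantileFun ν u - m) ^ 2 = Var[id; ν] := by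
    rw [variance_eq_integral measurable_id.aemeasurable]
    exact integral_comp_quantileFun (g := fun x => (x - m) ^ 2) (by fun_prop)
  have hcov : ∫ u in Ioo 0 1, (quantileFun ν u - m) * (1 - minUniformDensity n u) =
      m - ∫ u in Ioo 0 1, quantileFun ν u * minUniformDensity n u := by
    have hexpand : ∀ u, (quantileFun ν u - m) * (1 - minUniformDensity n u) =
        quantileFun ν u - quantileFun ν u * minUniformDensity n u -
          (m - m * minUniformDensity n u) := fun u => by ring
    have hQ_sub : Integrable (fun u => quantileFun ν u - quantileFun ν u * minUniformDensity n u)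
        (volume.restrict (Ioo 0 1)) := hQi.sub hQw
    have hm_sub : Integrable (fun u => m - m * minUniformDensity n u)
        (volume.restrict (Ioo 0 1)) := (integrable_const m).sub hmw
    simp_rw [hexpand]
    rw [integral_sub hQ_sub hm_sub, integral_sub hQi hQw,
      integral_sub (integrable_const m) hmw, integral_const_mul,
      setIntegral_minUniformDensity (by omega), hmean]
    simp
  have hn1 : (0 : ℝ) ≤ n - 1 := by
    have : (1 : ℝ) ≤ n := by exact_mod_cast hn
    linarith
  calc m - ∫ u in Ioo 0 1, quantileFun ν u * minUniformDensity n u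
      = ∫ u in Ioo 0 1, (quantileFun ν u - m) * (1 - minUniformDensity n u) := hcov.symm
    _ ≤ √(∫ u in Ioo 0 1, (quantileFun ν u - m) ^ 2) *
          √(∫ u in Ioo 0 1, (1 - minUniformDensity n u) ^ 2) :=
      integral_mul_le_sqrt_integral_sq_mul_sqrt_integral_sq (hQ.sub (memLp_const m))
        ((memLp_const 1).sub hw)
    _ = (n - 1) * √(Var[id; ν]) / √(2 * n - 1) := by
      rw [hvar, setIntegral_one_sub_minUniformDensity_sq hn, Real.sqrt_div' _ (by linarith),
        Real.sqrt_sq hn1]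
      ring

theorem min_expectation_bounds {Ω : Type*} [MeasureSpace Ω]
    [IsProbabilityMeasure (ℙ : Measure Ω)]
    (N : ℕ) (hN : 1 ≤ N) (μ σ : ℝ) (hσ : 0 ≤ σ)
    (X : Fin (N + 1) → Ω → ℝ) (hmeas : ∀ i, Measurable (X i))
    (hindep : iIndepFun X ℙ)
    (hident : ∀ i j, Measure.map (X i) ℙ = Measure.map (X j) ℙ)
    (hL2 : ∀ i, MemLp (X i) 2 ℙ)
    (hmean : ∀ i, ∫ ω, X i ω ∂ℙ = μ)
    (hvar : ∀ i, variance (X i) ℙ = σ ^ 2) :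
    (μ - (N - 1) * σ / Real.sqrt (2 * N - 1) ≤
        ∫ ω, (⨅ i : Fin N, X i.castSucc ω) ∂ℙ) ∧
    (∫ ω, (⨅ i : Fin N, X i.castSucc ω) ∂ℙ ≤ μ) ∧
    (∫ ω, (⨅ i : Fin (N + 1), X i ω) ∂ℙ ≤
        ∫ ω, (⨅ i : Fin N, X i.castSucc ω) ∂ℙ) := by
  have : NeZero N := ⟨by omega⟩
  have hint : ∀ i, Integrable (X i) ℙ := fun i => (hL2 i).integrable one_le_two
  refine ⟨?_, (integral_iInf_le (fun _ => hint _) 0).trans_eq (hmean _),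
    integral_iInf_le_integral_iInf_comp hint Fin.castSucc⟩
  set ν := Measure.map (X 0) ℙ
  have hmeanν : ∫ x, x ∂ν = μ :=
    (integral_map (hmeas 0).aemeasurable aestronglyMeasurable_id).trans (hmean 0)
  have hvarν : Var[id; ν] = σ ^ 2 := (variance_id_map (hmeas 0).aemeasurable).trans (hvar 0)
  have hL2ν : MemLp id 2 ν :=
    (memLp_map_measure_iff aestronglyMeasurable_id (hmeas 0).aemeasurable).2 (hL2 0)
  have := Measure.isProbabilityMeasure_map (μ := (ℙ : Measure Ω)) (hmeas 0).aemeasurable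
  have hmin := integral_iInf_eq_setIntegral_quantileFun_mul
    (hindep.precomp (Fin.castSucc_injective N)) (fun _ => hmeas _) (fun _ => hident _ 0)
  have hbound := sub_setIntegral_quantileFun_mul_minUniformDensity_le hL2ν hN
  rw [Fintype.card_fin] at hmin
  rw [hmeanν, hvarν, Real.sqrt_sq hσ, ← hmin] at hbound
  linarith
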